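/- Theorem 3.2: Let G be a symmetric 2×2 real matrix and F = J · G the matrix of the associated operator. If (tr F)² < 4·det F, then there exist an invertible 2×2 real matrix S and real numbers a, b with b ≠ 0 such that Sᵀ · J · S = J and Sᵀ · G · S is the matrix with rows (a, b) and (b, −a). -/

import Mathlib

open Matrix

/-- The Minkowski metric matrix `diag(1, -1)`. -/
def Jmat : Matrix (Fin 2) (Fin 2) ℝ := !![1, 0; 0, -1]

/-!
For `G = !![p, q; q, r]` the hypothesis reads `(p + r)² < (2q)²`. A hyperbolic rotation (boost)
by rapidity `τ / 2` preserves `J` and turns the trace of `G` into `(p + r) cosh τ + 2q sinh τ`,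
which vanishes for `tanh τ = -(p + r) / (2q)`; such a `τ` exists because this ratio lies in
`(-1, 1)`. A symmetric matrix with zero trace has the shape `!![a, b; b, -a]`, and `b` cannot
vanish since the two linear conditions on `(cosh τ, sinh τ)` would then force `cosh τ = 0`.
-/

open Real

lemma trace_sq_sub_four_mul_det_Jmat_mul (p q r : ℝ) :
    (Jmat * !![p, q; q, r]).trace ^ 2 - 4 * (Jmat * !![p, q; q, r]).det =
      (p + r) ^ 2 - (2 * q) ^ 2 := by
  rw [Jmat, mul_fin_two, trace_fin_two_of, det_fin_two_of]
  ring

lemma exists_eq_fin_two_of_transpose_eq {α : Type*} {G : Matrix (Fin 2) (Fin 2) α}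
    (hG : Gᵀ = G) : ∃ p q r : α, G = !![p, q; q, r] :=
  ⟨G 0 0, G 0 1, G 1 1, by rw [eta_fin_two G, ← congrFun (congrFun hG 0) 1]; rfl⟩

lemma exists_mul_cosh_add_mul_sinh_eq_zero {α β : ℝ} (h : α ^ 2 < β ^ 2) :
    ∃ τ : ℝ, α * cosh τ + β * sinh τ = 0 := by
  have hβ : β ≠ 0 := by rintro rfl; nlinarith [sq_nonneg α]
  have hlt : |-α / β| < 1 := by
    rw [abs_div, abs_neg, div_lt_one (abs_pos.2 hβ)]
    exact sq_lt_sq.1 h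
  obtain ⟨τ, -, hτ⟩ := tanh_surjOn (Set.mem_Ioo.2 (abs_lt.1 hlt))
  refine ⟨τ, ?_⟩
  rw [tanh_eq_sinh_div_cosh, div_eq_iff (cosh_pos τ).ne'] at hτ
  rw [hτ]
  field_simp
  ring

lemma mul_sinh_add_mul_cosh_ne_zero {α β τ : ℝ} (h : α ^ 2 < β ^ 2)
    (hτ : α * cosh τ + β * sinh τ = 0) : α * sinh τ + β * cosh τ ≠ 0 := by
  intro h'
  have : (β ^ 2 - α ^ 2) * cosh τ = 0 := by linear_combination β * h' - α * hτ
  exact (mul_ne_zero (sub_ne_zero.2 h.ne') (cosh_pos τ).ne') this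

noncomputable def boost (t : ℝ) : Matrix (Fin 2) (Fin 2) ℝ := !![cosh t, sinh t; sinh t, cosh t]

lemma det_boost (t : ℝ) : (boost t).det = 1 := by
  rw [boost, det_fin_two_of, ← cosh_sq_sub_sinh_sq t]
  ring

lemma isUnit_boost (t : ℝ) : IsUnit (boost t) := by
  rw [isUnit_iff_isUnit_det, det_boost]
  exact isUnit_one

lemma transpose_boost (t : ℝ) : (boost t)ᵀ = boost t := by
  rw [boost, eta_fin_two (!![cosh t, sinh t; sinh t, cosh t]ᵀ)]
  rfl

lemma transpose_boost_mul_Jmat_mul_boost (t : ℝ) : (boost t)ᵀ * Jmat * boost t = Jmat := by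
  have h := cosh_sq_sub_sinh_sq t
  rw [transpose_boost, boost, Jmat, mul_fin_two, mul_fin_two]
  simp only [EmbeddingLike.apply_eq_iff_eq, vecCons_inj, and_true]
  refine ⟨⟨?_, ?_⟩, ?_, ?_⟩
  · linear_combination h
  · ring
  · ring
  · linear_combination -h

lemma transpose_boost_mul_mul_boost (p q r t : ℝ) :
    (boost t)ᵀ * !![p, q; q, r] * boost t =
      !![((p + r) * cosh (2 * t) + 2 * q * sinh (2 * t) + (p - r)) / 2,
          ((p + r) * sinh (2 * t) + 2 * q * cosh (2 * t)) / 2;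
        ((p + r) * sinh (2 * t) + 2 * q * cosh (2 * t)) / 2,
          ((p + r) * cosh (2 * t) + 2 * q * sinh (2 * t) - (p - r)) / 2] := by
  have h := cosh_sq_sub_sinh_sq t
  rw [transpose_boost, boost, mul_fin_two, mul_fin_two, cosh_two_mul, sinh_two_mul]
  simp only [EmbeddingLike.apply_eq_iff_eq, vecCons_inj, and_true]
  refine ⟨⟨?_, ?_⟩, ?_, ?_⟩
  · linear_combination (p - r) / 2 * h
  · ring
  · ring
  · linear_combination -(p - r) / 2 * h

/-- Theorem 3.2: if `(tr F)² < 4 det F` for the associated operator `F = J * G`, then in a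
suitable basis the metrics are given by `diag(1,-1)` and the matrix `(a, b; b, -a)` with
`b ≠ 0`. -/
theorem canonical_form_complex_eigenvalues (G : Matrix (Fin 2) (Fin 2) ℝ) (hG : Gᵀ = G)
    (F : Matrix (Fin 2) (Fin 2) ℝ) (hF : F = Jmat * G)
    (h : F.trace ^ 2 < 4 * F.det) :
    ∃ S : Matrix (Fin 2) (Fin 2) ℝ, ∃ a b : ℝ, IsUnit S ∧ b ≠ 0 ∧
      Sᵀ * Jmat * S = Jmat ∧ Sᵀ * G * S = !![a, b; b, -a] := by
  obtain ⟨p, q, r, rfl⟩ := exists_eq_fin_two_of_transpose_eq hG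
  subst hF
  have hdisc : (p + r) ^ 2 < (2 * q) ^ 2 := by
    linarith [trace_sq_sub_four_mul_det_Jmat_mul p q r]
  obtain ⟨τ, hτ⟩ := exists_mul_cosh_add_mul_sinh_eq_zero hdisc
  refine ⟨boost (τ / 2), (p - r) / 2, ((p + r) * sinh τ + 2 * q * cosh τ) / 2, isUnit_boost _,
    div_ne_zero (mul_sinh_add_mul_cosh_ne_zero hdisc hτ) two_ne_zero,
    transpose_boost_mul_Jmat_mul_boost _, ?_⟩
  rw [transpose_boost_mul_mul_boost, mul_div_cancel₀ τ two_ne_zero, hτ, zero_add, zero_sub,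
    neg_div]
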